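/- arXiv:2507.17715 — 2 statements merged into one kernel-verified Lean document; each statement's English description precedes it below -/
import Mathlib

section
/- Let A be an ortholattice and E a quantifier on A. Then for every a ∈ A, R_E[φ(a)] = φ(E a), where R_E[φ(a)] = {y ∈ F(A) : there exists x ∈ F(A) with a ∈ x and {E c : c ∈ x} ⊆ y}. -/
/-- An orthocomplementation on a bounded lattice. -/
def IsOrtho {A : Type*} [Lattice A] [BoundedOrder A] (perp : A → A) : Prop :=
  (∀ a : A, a ⊓ perp a = ⊥) ∧ (∀ a : A, a ⊔ perp a = ⊤) ∧
  (∀ a b : A, a ≤ b → perp b ≤ perp a) ∧ (∀ a : A, perp (perp a) = a)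

/-- A quantifier on an ortholattice. -/
def IsQuantifier {A : Type*} [Lattice A] [BoundedOrder A] (perp E : A → A) : Prop :=
  (∀ a b : A, E (a ⊔ b) = E a ⊔ E b) ∧ E ⊥ = ⊥ ∧ (∀ a : A, E (E a) = E a) ∧
  (∀ a : A, a ≤ E a) ∧ (∀ a : A, E (perp (E a)) = perp (E a))

/-- A proper filter: nonempty, upward closed, closed under meets, not containing ⊥. -/
def IsPF {A : Type*} [Lattice A] [BoundedOrder A] (x : Set A) : Prop :=
  x.Nonempty ∧ (∀ a ∈ x, ∀ b : A, a ≤ b → b ∈ x) ∧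
  (∀ a ∈ x, ∀ b ∈ x, a ⊓ b ∈ x) ∧ (⊥ : A) ∉ x

/-- The set of proper filters of `A`. -/
abbrev PF (A : Type*) [Lattice A] [BoundedOrder A] : Type _ := {x : Set A // IsPF x}

/-- `phi a` is the set of proper filters containing `a`. -/
def phi {A : Type*} [Lattice A] [BoundedOrder A] (a : A) : Set (PF A) := {x | a ∈ x.1}

/-- Orthogonal of a set of proper filters: `x ⊥ y` iff some `a ∈ x` has `perp a ∈ y`. -/
def oPerp {A : Type*} [Lattice A] [BoundedOrder A] (perp : A → A) (U : Set (PF A)) :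
    Set (PF A) := {x | ∀ y ∈ U, ∃ a ∈ x.1, perp a ∈ y.1}

theorem isPF_Ici {A : Type*} [Lattice A] [BoundedOrder A] {a : A} (ha : a ≠ ⊥) :
    IsPF (Set.Ici a) :=
  ⟨⟨a, le_rfl⟩, fun _ hb _ hbc => le_trans hb hbc, fun _ hb _ hc => le_inf hb hc,
    fun h => ha (le_bot_iff.mp h)⟩

theorem IsPF.mem_of_le {A : Type*} [Lattice A] [BoundedOrder A] {x : Set A} (hx : IsPF x)
    {a b : A} (ha : a ∈ x) (hab : a ≤ b) : b ∈ x :=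
  hx.2.1 a ha b hab

theorem IsQuantifier.monotone {A : Type*} [Lattice A] [BoundedOrder A] {perp E : A → A}
    (hE : IsQuantifier perp E) : Monotone E := fun a b hab =>
  calc E a ≤ E a ⊔ E b := le_sup_left
    _ = E (a ⊔ b) := (hE.1 a b).symm
    _ = E b := by rw [sup_eq_right.mpr hab]

theorem stmt10_general {A : Type*} [Lattice A] [BoundedOrder A] (perp : A → A)
    (E : A → A) (hE : IsQuantifier perp E) (a : A) :
    {y : PF A | ∃ x : PF A, a ∈ x.1 ∧ E '' x.1 ⊆ y.1} = phi (E a) := by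
  ext y
  constructor
  · rintro ⟨x, hax, hxy⟩
    exact hxy ⟨a, hax, rfl⟩
  · intro hEa
    have ha : a ≠ ⊥ := by
      rintro rfl
      exact y.2.2.2.2 (hE.2.1 ▸ hEa)
    refine ⟨⟨Set.Ici a, isPF_Ici ha⟩, le_rfl, ?_⟩
    rintro _ ⟨b, hab, rfl⟩
    exact y.2.mem_of_le hEa (hE.monotone hab)

theorem stmt10 {A : Type*} [Lattice A] [BoundedOrder A] (perp : A → A)
    (hA : IsOrtho perp) (E : A → A) (hE : IsQuantifier perp E) (a : A) :
    {y : PF A | ∃ x : PF A, a ∈ x.1 ∧ E '' x.1 ⊆ y.1} = phi (E a) :=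
  stmt10_general perp E hE a
end

section
/- Let A be an I-dimensional cylindric Boolean algebra and let i, k, l ∈ I with k ≠ i and k ≠ l. Define the relation S_k on F(A) by x S_k y iff {∃_k a : a ∈ x} = {∃_k a : a ∈ y}, and for W ⊆ F(A) let S_k[W] = {y ∈ F(A) : x S_k y for some x ∈ W}. Then S_k[φ(δ_{i,k}) ∩ φ(δ_{k,l})] = φ(δ_{i,l}). -/
/-!
Everything reduces to a fact about a single quantifier `E`: a proper filter `y` is `E`-equivalent to a
proper filter containing `d` iff `E d ∈ y`. For the converse direction take the filter generated by
`{d ⊓ E a | a ∈ y}`; it is proper and has the same `E`-closed elements as `y` because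
`E (d ⊓ E a) = E d ⊓ E a ≥ E d ⊓ a ∈ y`. The theorem is the case `E = ∃_k`, `d = δ_{i,k} ⊓ δ_{k,l}`,
where `E d = δ_{i,l}`.
-/

/-- A quantifier on a Boolean algebra. -/
def IsQuantifierB {A : Type*} [BooleanAlgebra A] (E : A → A) : Prop :=
  (∀ a b : A, E (a ⊔ b) = E a ⊔ E b) ∧ E ⊥ = ⊥ ∧ (∀ a : A, E (E a) = E a) ∧
  (∀ a : A, a ≤ E a) ∧ (∀ a : A, E (E a)ᶜ = (E a)ᶜ)

namespace IsPF

variable {A : Type*} [Lattice A] [BoundedOrder A] {x : Set A}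

theorem mem_of_le_s15 (hx : IsPF x) {a b : A} (ha : a ∈ x) (hab : a ≤ b) : b ∈ x :=
  hx.2.1 a ha b hab

theorem inf_mem (hx : IsPF x) {a b : A} (ha : a ∈ x) (hb : b ∈ x) : a ⊓ b ∈ x :=
  hx.2.2.1 a ha b hb

theorem bot_notMem (hx : IsPF x) : (⊥ : A) ∉ x :=
  hx.2.2.2

theorem inf_mem_iff (hx : IsPF x) {a b : A} : a ⊓ b ∈ x ↔ a ∈ x ∧ b ∈ x :=
  ⟨fun h => ⟨hx.mem_of_le_s15 h inf_le_left, hx.mem_of_le_s15 h inf_le_right⟩,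
    fun h => hx.inf_mem h.1 h.2⟩

theorem setOf_exists_map_le {g : A → A} (hx : IsPF x) (hg : Monotone g)
    (hne : ∀ a ∈ x, g a ≠ ⊥) : IsPF {c | ∃ a ∈ x, g a ≤ c} := by
  obtain ⟨a₀, ha₀⟩ := hx.1
  refine ⟨⟨g a₀, a₀, ha₀, le_rfl⟩, ?_, ?_, ?_⟩
  · rintro c ⟨a, ha, hac⟩ b hcb
    exact ⟨a, ha, hac.trans hcb⟩
  · rintro c ⟨a, ha, hac⟩ d ⟨b, hb, hbd⟩
    exact ⟨a ⊓ b, hx.inf_mem ha hb,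
      le_inf ((hg inf_le_left).trans hac) ((hg inf_le_right).trans hbd)⟩
  · rintro ⟨a, ha, hle⟩
    exact hne a ha (le_bot_iff.mp hle)

end IsPF

theorem phi_inf {A : Type*} [Lattice A] [BoundedOrder A] (a b : A) :
    phi (a ⊓ b) = phi a ∩ phi b :=
  Set.ext fun x => x.2.inf_mem_iff

namespace IsQuantifierB

variable {A : Type*} [BooleanAlgebra A] {E : A → A}

theorem map_sup (hE : IsQuantifierB E) (a b : A) : E (a ⊔ b) = E a ⊔ E b := hE.1 a b

theorem map_bot (hE : IsQuantifierB E) : E ⊥ = ⊥ := hE.2.1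

theorem map_map (hE : IsQuantifierB E) (a : A) : E (E a) = E a := hE.2.2.1 a

theorem le_map (hE : IsQuantifierB E) (a : A) : a ≤ E a := hE.2.2.2.1 a

theorem map_compl_map (hE : IsQuantifierB E) (a : A) : E (E a)ᶜ = (E a)ᶜ := hE.2.2.2.2 a

theorem monotone (hE : IsQuantifierB E) : Monotone E := fun a b hab => by
  simpa only [sup_eq_right.mpr hab] using (hE.map_sup a b).ge.trans' le_sup_left

theorem map_inf_map (hE : IsQuantifierB E) (a b : A) : E (a ⊓ E b) = E a ⊓ E b := by
  refine le_antisymm (le_inf (hE.monotone inf_le_left)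
    ((hE.monotone inf_le_right).trans (hE.map_map b).le)) ?_
  have hsplit : E a = E (a ⊓ E b) ⊔ E (a ⊓ (E b)ᶜ) := by
    rw [← hE.map_sup, ← inf_sup_left, sup_compl_eq_top, inf_top_eq]
  have hcompl : E (a ⊓ (E b)ᶜ) ≤ (E b)ᶜ :=
    (hE.monotone inf_le_right).trans (hE.map_compl_map b).le
  calc E a ⊓ E b ≤ (E (a ⊓ E b) ⊔ (E b)ᶜ) ⊓ E b := by
        rw [hsplit]; exact inf_le_inf_right _ (sup_le_sup_left hcompl _)
    _ ≤ E (a ⊓ E b) := by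
        rw [inf_sup_right, compl_inf_self, sup_bot_eq]; exact inf_le_left

theorem image_eq_setOf_map_eq (hE : IsQuantifierB E) (y : PF A) :
    E '' y.1 = {c | c ∈ y.1 ∧ E c = c} := by
  ext c
  constructor
  · rintro ⟨a, ha, rfl⟩
    exact ⟨y.2.mem_of_le_s15 ha (hE.le_map a), hE.map_map a⟩
  · rintro ⟨hc, hfix⟩
    exact ⟨c, hc, hfix⟩

theorem mem_of_image_eq (hE : IsQuantifierB E) {d : A} {x y : PF A} (hd : d ∈ x.1)
    (hxy : E '' x.1 = E '' y.1) : E d ∈ y.1 := by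
  have : E d ∈ E '' y.1 := hxy ▸ Set.mem_image_of_mem E hd
  rw [hE.image_eq_setOf_map_eq] at this
  exact this.1

theorem exists_image_eq (hE : IsQuantifierB E) {d : A} {y : PF A} (hy : E d ∈ y.1) :
    ∃ x ∈ phi d, E '' x.1 = E '' y.1 := by
  have hlower : ∀ a, E d ⊓ a ≤ E (d ⊓ E a) := fun a => by
    rw [hE.map_inf_map]; exact inf_le_inf_left _ (hE.le_map a)
  have hne : ∀ a ∈ y.1, d ⊓ E a ≠ ⊥ := by
    rintro a ha hbot
    have hle : E d ⊓ a ≤ ⊥ := by simpa only [hbot, hE.map_bot] using hlower a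
    exact y.2.bot_notMem (y.2.mem_of_le_s15 (y.2.inf_mem hy ha) hle)
  let x : PF A := ⟨_, y.2.setOf_exists_map_le (fun a b hab => inf_le_inf_left d (hE.monotone hab))
    hne⟩
  refine ⟨x, ⟨E d, hy, inf_le_left⟩, ?_⟩
  rw [hE.image_eq_setOf_map_eq, hE.image_eq_setOf_map_eq]
  ext c
  constructor
  · rintro ⟨⟨a, ha, hac⟩, hfix⟩
    refine ⟨y.2.mem_of_le_s15 (y.2.inf_mem hy ha) ((hlower a).trans ?_), hfix⟩
    exact hfix ▸ hE.monotone hac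
  · rintro ⟨hc, hfix⟩
    exact ⟨⟨c, hc, inf_le_right.trans hfix.le⟩, hfix⟩

theorem setOf_exists_image_eq (hE : IsQuantifierB E) (d : A) :
    {y : PF A | ∃ x ∈ phi d, E '' x.1 = E '' y.1} = phi (E d) :=
  Set.ext fun _ => ⟨fun ⟨_, hd, hxy⟩ => hE.mem_of_image_eq hd hxy, hE.exists_image_eq⟩

end IsQuantifierB

theorem stmt15_general {A : Type*} [BooleanAlgebra A] {I : Type*}
    (ex : I → A → A) (hq : ∀ i, IsQuantifierB (ex i))
    (δ : I → I → A)
    (hδ : ∀ i k l, k ≠ i → k ≠ l → ex k (δ i k ⊓ δ k l) = δ i l)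
    (i k l : I) (hki : k ≠ i) (hkl : k ≠ l) :
    {y : PF A | ∃ x ∈ phi (δ i k) ∩ phi (δ k l), ex k '' x.1 = ex k '' y.1}
      = phi (δ i l) := by
  rw [← phi_inf, ← hδ i k l hki hkl]
  exact (hq k).setOf_exists_image_eq _

theorem stmt15 {A : Type*} [BooleanAlgebra A] {I : Type*}
    (ex : I → A → A) (hq : ∀ i, IsQuantifierB (ex i))
    (hcomm : ∀ i k (a : A), ex i (ex k a) = ex k (ex i a))
    (δ : I → I → A) (hδsym : ∀ i k, δ i k = δ k i) (hδrefl : ∀ i, δ i i = ⊤)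
    (hδ : ∀ i k l, k ≠ i → k ≠ l → ex k (δ i k ⊓ δ k l) = δ i l)
    (hax : ∀ i k (a : A), i ≠ k → ex i (δ i k ⊓ a) ⊓ ex i (δ i k ⊓ aᶜ) = ⊥)
    (i k l : I) (hki : k ≠ i) (hkl : k ≠ l) :
    {y : PF A | ∃ x ∈ phi (δ i k) ∩ phi (δ k l), ex k '' x.1 = ex k '' y.1}
      = phi (δ i l) :=
  stmt15_general ex hq δ hδ i k l hki hkl
end
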